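/- Let k ≥ 2, set n = 2k, and let λ = (λ₁,…,λ_n) ∈ Γ_k^+. Then for every index i ∈ {1,…,n}, σ_{k−1}(λ|i) · ((n−2)λ_i + σ_1(λ)) ≥ (n−1) σ_k(λ). -/

import Mathlib

/-!
Write `μ = λ|i`, so that `σ_r(λ) = σ_r(μ) + λ_i σ_{r-1}(μ)`. Then the inequality reduces to
`(n - 1) σ_k(μ) ≤ σ_1(μ) σ_{k-1}(μ)` for the `n - 1 = 2k - 1` numbers `μ`, and because
`C(2k-1, k) = C(2k-1, k-1)` this is `E_k ≤ E_1 E_{k-1}` for the means `E_r = σ_r(μ) / C(2k-1, r)`.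
That follows from Newton's inequalities `E_{r-1} E_{r+1} ≤ E_r²` once `E_1, …, E_{k-1} > 0`, and
this positivity (`μ ∈ Γ_{k-1}`) follows from `λ ∈ Γ_k` and Newton again.

Newton's inequalities: differentiating `∏ (X + μ_j)` down to degree `r + 1` keeps it real-rooted
(Rolle), and for its roots the inequality is the top one, `σ_{N-2} σ_N ≤ c σ_{N-1}²`; passing to
reciprocals turns this into `σ_0 σ_2 ≤ c σ_1²`, which is Cauchy–Schwarz.
-/

/-- The k-th elementary symmetric polynomial of `λ = (λ₁,…,λ_n)` (with `σ_0 = 1`). -/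
def esym (n : ℕ) (k : ℕ) (lam : Fin n → ℝ) : ℝ :=
  ∑ s ∈ Finset.powersetCard k (Finset.univ : Finset (Fin n)), ∏ i ∈ s, lam i

open Polynomial

namespace Multiset

section CommSemiring

variable {R : Type*} [CommSemiring R]

@[simp]
theorem esymm_zero_right (s : Multiset R) : s.esymm 0 = 1 := by
  simp [esymm]

theorem esymm_one_right (s : Multiset R) : s.esymm 1 = s.sum := by
  simp [esymm, powersetCard_one, map_map]

theorem esymm_card (s : Multiset R) : s.esymm (card s) = s.prod := by
  simp [esymm, powersetCard_self]

theorem esymm_eq_zero_of_card_lt (s : Multiset R) {k : ℕ} (h : card s < k) : s.esymm k = 0 := by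
  simp [esymm, powersetCard_eq_empty _ h]

theorem esymm_cons_succ (a : R) (s : Multiset R) (k : ℕ) :
    (a ::ₘ s).esymm (k + 1) = s.esymm (k + 1) + a * s.esymm k := by
  simp [esymm, powersetCard_cons, map_map, sum_map_mul_left]

theorem esymm_zero_cons (s : Multiset R) (k : ℕ) : ((0 : R) ::ₘ s).esymm k = s.esymm k := by
  cases k with
  | zero => simp
  | succ k => simp [esymm_cons_succ]

end CommSemiring

theorem sum_sq_eq_sum_map_sq_add_two_mul_esymm_two {R : Type*} [CommRing R] (s : Multiset R) :
    s.sum ^ 2 = (s.map (· ^ 2)).sum + 2 * s.esymm 2 := by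
  induction s using Multiset.induction_on with
  | empty => simp [esymm_eq_zero_of_card_lt 0 (k := 2) (by simp)]
  | cons a s ih =>
    rw [esymm_cons_succ, esymm_one_right, sum_cons, map_cons, sum_cons]
    linear_combination ih

theorem esymm_eq_prod_mul_esymm_map_inv {K : Type*} [Field K] (s : Multiset K)
    (hs : (0 : K) ∉ s) {i k : ℕ} (h : i + k = card s) :
    s.esymm i = s.prod * (s.map (·⁻¹)).esymm k := by
  induction s using Multiset.induction_on generalizing i k with
  | empty =>
    obtain ⟨rfl, rfl⟩ : i = 0 ∧ k = 0 := by simpa using h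
    simp
  | cons a s ih =>
    have ha : a ≠ 0 := fun h => hs (h ▸ mem_cons_self a s)
    have hs' : (0 : K) ∉ s := fun h => hs (mem_cons_of_mem h)
    rcases i with _ | i
    · obtain rfl : k = card (a ::ₘ s) := by omega
      rw [esymm_zero_right, ← card_map (·⁻¹), esymm_card, prod_map_inv',
        mul_inv_cancel₀ (prod_ne_zero hs)]
    rcases k with _ | k
    · rw [add_zero] at h
      rw [h, esymm_card, esymm_zero_right, mul_one]
    rw [card_cons] at h
    rw [map_cons, esymm_cons_succ, esymm_cons_succ, ih hs' (i := i + 1) (k := k) (by omega),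
      ih hs' (i := i) (k := k + 1) (by omega), prod_cons]
    field_simp
    ring

section LinearOrder

variable {K : Type*} [Field K] [LinearOrder K] [IsStrictOrderedRing K]

theorem sq_sum_le_card_mul_sum_map_sq (s : Multiset K) :
    s.sum ^ 2 ≤ card s * (s.map (· ^ 2)).sum := by
  classical
  calc s.sum ^ 2 = (∑ x : s, (x : K)) ^ 2 := by rw [Finset.sum_eq_multiset_sum, map_univ_coe]
    _ ≤ (Finset.univ : Finset s).card * ∑ x : s, (x : K) ^ 2 := sq_sum_le_card_mul_sum_sq
    _ = card s * (s.map (· ^ 2)).sum := by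
      rw [Finset.card_univ, card_coe, Finset.sum_eq_multiset_sum, ← map_univ_comp_coe s]
      rfl

theorem two_mul_card_mul_esymm_two_le (s : Multiset K) :
    2 * card s * s.esymm 2 ≤ (card s - 1) * s.esymm 1 ^ 2 := by
  rw [esymm_one_right]
  linear_combination sq_sum_le_card_mul_sum_map_sq s -
    card s * sum_sq_eq_sum_map_sq_add_two_mul_esymm_two s

theorem two_mul_esymm_mul_prod_le_of_card_eq (s : Multiset K) {n : ℕ} (hs : card s = n + 2) :
    2 * (n + 2) * (s.esymm n * s.prod) ≤ (n + 1) * s.esymm (n + 1) ^ 2 := by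
  by_cases h0 : (0 : K) ∈ s
  · rw [prod_eq_zero h0, mul_zero, mul_zero]
    positivity
  have hn : s.esymm n = s.prod * (s.map (·⁻¹)).esymm 2 :=
    esymm_eq_prod_mul_esymm_map_inv s h0 (by omega)
  have hn1 : s.esymm (n + 1) = s.prod * (s.map (·⁻¹)).esymm 1 :=
    esymm_eq_prod_mul_esymm_map_inv s h0 (by omega)
  have hinv := two_mul_card_mul_esymm_two_le (s.map (·⁻¹))
  rw [card_map, hs] at hinv
  push_cast at hinv
  rw [hn, hn1]
  linear_combination s.prod ^ 2 * hinv

end LinearOrder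

end Multiset

namespace Polynomial

theorem card_roots_le_card_roots_iterate_derivative_add (p : ℝ[X]) (d : ℕ) :
    Multiset.card p.roots ≤ Multiset.card (derivative^[d] p).roots + d := by
  induction d with
  | zero => simp
  | succ d ih =>
    rw [Function.iterate_succ_apply']
    linarith [card_roots_le_derivative (derivative^[d] p)]

theorem card_roots_iterate_derivative_of_card_roots_eq {p : ℝ[X]}
    (hp : Multiset.card p.roots = p.natDegree) (d : ℕ) :
    Multiset.card (derivative^[d] p).roots = p.natDegree - d ∧
      (derivative^[d] p).natDegree = p.natDegree - d := by
  have h₁ := card_roots_le_card_roots_iterate_derivative_add p d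
  have h₂ := card_roots' (derivative^[d] p)
  have h₃ := natDegree_iterate_derivative p d
  omega

theorem two_mul_coeff_zero_mul_coeff_two_le {K : Type*} [Field K] [LinearOrder K]
    [IsStrictOrderedRing K] {p : K[X]} (hroots : Multiset.card p.roots = p.natDegree) {n : ℕ}
    (hp : p.natDegree = n + 2) :
    2 * (n + 2) * (p.coeff 0 * p.coeff 2) ≤ (n + 1) * p.coeff 1 ^ 2 := by
  have hcoeff (k : ℕ) (hk : k ≤ 2) : p.coeff k =
      p.leadingCoeff * (-1) ^ (n + 2 - k) * p.roots.esymm (n + 2 - k) := by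
    rw [coeff_eq_esymm_roots_of_card hroots (by omega), hp]
  have hnewton := p.roots.two_mul_esymm_mul_prod_le_of_card_eq (hroots.trans hp)
  rw [← Multiset.esymm_card, hroots, hp] at hnewton
  rw [hcoeff 0 (by omega), hcoeff 1 (by omega), hcoeff 2 (by omega)]
  simp only [Nat.sub_zero, show n + 2 - 1 = n + 1 by omega, show n + 2 - 2 = n by omega, pow_succ]
  linear_combination (p.leadingCoeff * (-1) ^ n) ^ 2 * hnewton

end Polynomial

namespace Multiset

theorem esymm_newton (s : Multiset ℝ) {j : ℕ} (hj : j + 2 ≤ card s) :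
    (j + 2) * (card s - j) * (s.esymm j * s.esymm (j + 2)) ≤
      (j + 1) * (card s - j - 1) * s.esymm (j + 1) ^ 2 := by
  obtain ⟨d, hd⟩ : ∃ d, card s = j + 2 + d := ⟨card s - (j + 2), by omega⟩
  set P := (s.map (X + C ·)).prod
  have hP : P = ((s.map Neg.neg).map (X - C ·)).prod := by
    simp [P, Multiset.map_map, sub_eq_add_neg]
  have hPdeg : P.natDegree = card s := by
    rw [hP, natDegree_multiset_prod_X_sub_C_eq_card, card_map]
  have hProots : card P.roots = P.natDegree := by
    rw [hPdeg, hP, roots_multiset_prod_X_sub_C, card_map]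
  set Q := derivative^[d] P
  obtain ⟨hQroots, hQdeg⟩ := card_roots_iterate_derivative_of_card_roots_eq hProots d
  rw [hPdeg, hd, Nat.add_sub_cancel] at hQroots hQdeg
  have hQ := two_mul_coeff_zero_mul_coeff_two_le (hQroots.trans hQdeg.symm) hQdeg
  have hcoeff (t : ℕ) (ht : t ≤ 2) :
      Q.coeff t = (t + d).descFactorial d * s.esymm (j + 2 - t) := by
    rw [coeff_iterate_derivative, nsmul_eq_mul, prod_X_add_C_coeff s (by omega), hd,
      show j + 2 + d - (t + d) = j + 2 - t by omega]
  rw [hcoeff 0 (by omega), hcoeff 1 (by omega), hcoeff 2 (by omega)] at hQ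
  simp only [Nat.sub_zero, show j + 2 - 1 = j + 1 by omega, show j + 2 - 2 = j by omega,
    zero_add] at hQ
  have hD₁ : ((1 + d).descFactorial d : ℝ) = (d + 1) * d.descFactorial d := by
    have := Nat.succ_descFactorial d d
    rw [Nat.add_sub_cancel_left, one_mul] at this
    rw [add_comm, this]; push_cast; ring
  have hD₂ : 2 * ((2 + d).descFactorial d : ℝ) = (d + 2) * (1 + d).descFactorial d := by
    have := Nat.succ_descFactorial (d + 1) d
    rw [show d + 1 + 1 - d = 2 by omega] at this
    rw [add_comm 2, add_comm 1]; exact_mod_cast this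
  have hD₀ : (0 : ℝ) < d.descFactorial d := by
    rw [Nat.descFactorial_self]; exact_mod_cast d.factorial_pos
  rw [hD₁] at hQ hD₂
  rw [hd]; push_cast
  refine le_of_mul_le_mul_left ?_ (by positivity : (0 : ℝ) < (d + 1) * d.descFactorial d ^ 2)
  linear_combination hQ - (j + 2) * d.descFactorial d * s.esymm j * s.esymm (j + 2) * hD₂

theorem esymm_mul_esymm_le_sq (s : Multiset ℝ) (j : ℕ) :
    s.esymm j * s.esymm (j + 2) ≤ s.esymm (j + 1) ^ 2 := by
  rcases lt_or_ge (card s) (j + 2) with hj | hj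
  · rw [esymm_eq_zero_of_card_lt s hj, mul_zero]
    positivity
  have hjs : (j : ℝ) + 2 ≤ card s := by exact_mod_cast hj
  refine le_of_mul_le_mul_left ((esymm_newton s hj).trans ?_)
    (mul_pos (by positivity) (by linarith) : (0 : ℝ) < (j + 2) * (card s - j))
  exact mul_le_mul_of_nonneg_right (by nlinarith) (sq_nonneg _)

theorem esymm_pos_of_esymm_cons_pos (a : ℝ) (s : Multiset ℝ) {k : ℕ}
    (h : ∀ r, 1 ≤ r → r ≤ k → 0 < (a ::ₘ s).esymm r) : ∀ r < k, 0 < s.esymm r := by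
  intro r hr
  induction r with
  | zero => simp
  | succ r ih =>
    have hprev := ih (by omega)
    by_contra! hle
    have h₁ := h (r + 1) (by omega) (by omega)
    have h₂ := h (r + 2) (by omega) hr
    rw [esymm_cons_succ] at h₁ h₂
    have ha : 0 < a := pos_of_mul_pos_left (by linarith) hprev.le
    have hconvex : s.esymm (r + 1) ^ 2 < s.esymm r * s.esymm (r + 2) := by
      nlinarith [mul_pos hprev h₂]
    linarith [esymm_mul_esymm_le_sq s r]

noncomputable def esymmMean (s : Multiset ℝ) (k : ℕ) : ℝ := s.esymm k / (card s).choose k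

theorem esymmMean_zero (s : Multiset ℝ) : s.esymmMean 0 = 1 := by simp [esymmMean]

theorem esymmMean_mul_esymmMean_le_sq (s : Multiset ℝ) (j : ℕ) :
    s.esymmMean j * s.esymmMean (j + 2) ≤ s.esymmMean (j + 1) ^ 2 := by
  rcases lt_or_ge (card s) (j + 2) with hj | hj
  · rw [esymmMean, esymmMean, esymm_eq_zero_of_card_lt s hj, zero_div, mul_zero]
    positivity
  have hchoose (i : ℕ) (hi : i ≤ card s) : (0 : ℝ) < (card s).choose i := by
    exact_mod_cast Nat.choose_pos hi
  have h₁ : ((card s).choose (j + 1) : ℝ) * (j + 1) = (card s).choose j * (card s - j) := by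
    rw [← Nat.cast_sub (by omega)]; exact_mod_cast Nat.choose_succ_right_eq (card s) j
  have h₂ : ((card s).choose (j + 2) : ℝ) * (j + 2) =
      (card s).choose (j + 1) * (card s - j - 1) := by
    rw [sub_sub, ← Nat.cast_add_one, ← Nat.cast_sub (by omega)]
    exact_mod_cast Nat.choose_succ_right_eq (card s) (j + 1)
  have hjs : (j : ℝ) + 2 ≤ card s := by exact_mod_cast hj
  rw [esymmMean, esymmMean, esymmMean, div_mul_div_comm, div_pow,
    div_le_div_iff₀ (mul_pos (hchoose j (by omega)) (hchoose _ hj))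
      (pow_pos (hchoose _ (by omega)) 2)]
  refine le_of_mul_le_mul_left ?_
    (mul_pos (by positivity) (by linarith) : (0 : ℝ) < (j + 2) * (card s - j))
  linear_combination ((card s).choose (j + 1) : ℝ) ^ 2 * esymm_newton s hj +
    s.esymm (j + 1) ^ 2 * (j + 2) * (card s).choose (j + 2) * h₁ -
    s.esymm (j + 1) ^ 2 * (card s).choose (j + 1) * (j + 1) * h₂

end Multiset

theorem apply_succ_le_apply_one_mul_of_logConcave {K : Type*} [Field K] [LinearOrder K]
    [IsStrictOrderedRing K] {p : ℕ → K} (h₀ : p 0 = 1)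
    (hp : ∀ j, p j * p (j + 2) ≤ p (j + 1) ^ 2) {n : ℕ} (hpos : ∀ r < n, 0 < p r) :
    ∀ r < n, p (r + 1) ≤ p 1 * p r := by
  intro r hr
  induction r with
  | zero => rw [h₀, mul_one]
  | succ r ih =>
    refine le_of_mul_le_mul_left ?_ (hpos r (by omega))
    calc p r * p (r + 2) ≤ p (r + 1) * p (r + 1) := by rw [← sq]; exact hp r
      _ ≤ p (r + 1) * (p 1 * p r) := by gcongr; exacts [(hpos _ hr).le, ih (by omega)]
      _ = p r * (p 1 * p (r + 1)) := by ring

namespace Multiset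

theorem esymmMean_succ_le_esymmMean_one_mul (s : Multiset ℝ) {k : ℕ} (hk : k ≤ card s)
    (hpos : ∀ r ≤ k, 0 < s.esymm r) : s.esymmMean (k + 1) ≤ s.esymmMean 1 * s.esymmMean k :=
  apply_succ_le_apply_one_mul_of_logConcave s.esymmMean_zero s.esymmMean_mul_esymmMean_le_sq
    (fun r hr => div_pos (hpos r (by omega)) (by exact_mod_cast Nat.choose_pos (by omega))) k
    (Nat.lt_succ_self k)

theorem card_mul_esymm_le_esymm_one_mul_of_card_eq (s : Multiset ℝ) {k : ℕ}
    (hs : card s = 2 * k + 1) (hpos : ∀ r ≤ k, 0 < s.esymm r) :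
    card s * s.esymm (k + 1) ≤ s.esymm 1 * s.esymm k := by
  have h := s.esymmMean_succ_le_esymmMean_one_mul (by omega) hpos
  have hsymm : (card s).choose (k + 1) = (card s).choose k := by
    rw [← Nat.choose_symm (by omega), hs, show 2 * k + 1 - (k + 1) = k by omega]
  have hC : (0 : ℝ) < (card s).choose k := by exact_mod_cast Nat.choose_pos (by omega)
  have hm : (0 : ℝ) < card s := by exact_mod_cast (by omega : 0 < card s)
  rw [esymmMean, esymmMean, esymmMean, hsymm, Nat.choose_one_right, div_mul_div_comm,
    div_le_div_iff₀ hC (mul_pos hm hC)] at h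
  nlinarith

end Multiset

theorem Finset.univ_val_map_update {ι α : Type*} [Fintype ι] [DecidableEq ι] (f : ι → α) (i : ι)
    (a : α) : univ.val.map (Function.update f i a) = a ::ₘ (univ.erase i).val.map f := by
  have huniv : (univ : Finset ι).val = i ::ₘ (univ.erase i).val := by
    rw [erase_val, Multiset.cons_erase (mem_univ i)]
  rw [huniv, Multiset.map_cons, Function.update_self]
  congr 1
  exact Multiset.map_congr rfl fun j hj => Function.update_of_ne (ne_of_mem_erase hj) a f

theorem newton_ric_eigen_inequality_general (k : ℕ)
    (lam : Fin (2 * k) → ℝ)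
    (hG : ∀ j : ℕ, 1 ≤ j → j ≤ k → 0 < esym (2 * k) j lam) :
    ∀ i : Fin (2 * k),
      ((2 * k : ℝ) - 1) * esym (2 * k) k lam ≤
        esym (2 * k) (k - 1) (Function.update lam i 0) *
          (((2 * k : ℝ) - 2) * lam i + esym (2 * k) 1 lam) := by
  intro i
  obtain ⟨k, rfl⟩ : ∃ k', k = k' + 1 := ⟨k - 1, by have := i.pos; omega⟩
  set μ := (Finset.univ.erase i).val.map lam
  have hesym (f : Fin (2 * (k + 1)) → ℝ) (r : ℕ) :
      esym (2 * (k + 1)) r f = (Finset.univ.val.map f).esymm r :=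
    (Finset.esymm_map_val f _ r).symm
  have hlam : Finset.univ.val.map lam = lam i ::ₘ μ := by
    simpa only [Function.update_eq_self] using Finset.univ_val_map_update lam i (lam i)
  have hcard : Multiset.card μ = 2 * k + 1 := by simp [μ]; omega
  have hpos := μ.esymm_pos_of_esymm_cons_pos (lam i) (k := k + 1) fun r h₁ h₂ => by
    simpa only [hesym, hlam] using hG r h₁ h₂
  have key := μ.card_mul_esymm_le_esymm_one_mul_of_card_eq hcard fun r hr => hpos r (by omega)
  have h₁ : (lam i ::ₘ μ).esymm 1 = μ.esymm 1 + lam i := by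
    simpa using Multiset.esymm_cons_succ (lam i) μ 0
  rw [hesym, hesym, hesym, hlam, Finset.univ_val_map_update, Multiset.esymm_zero_cons,
    Multiset.esymm_cons_succ, h₁, Nat.add_sub_cancel]
  rw [hcard] at key
  push_cast at key ⊢
  linear_combination key

/-- for `n = 2k`, `λ ∈ Γ_k^+`, and any `i`,
`σ_{k−1}(λ|i) ((n−2)λ_i + σ_1(λ)) ≥ (n−1) σ_k(λ)`. -/
theorem newton_ric_eigen_inequality (k : ℕ) (hk : 2 ≤ k)
    (lam : Fin (2 * k) → ℝ)
    (hG : ∀ j : ℕ, 1 ≤ j → j ≤ k → 0 < esym (2 * k) j lam) :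
    ∀ i : Fin (2 * k),
      ((2 * k : ℝ) - 1) * esym (2 * k) k lam ≤
        esym (2 * k) (k - 1) (Function.update lam i 0) *
          (((2 * k : ℝ) - 2) * lam i + esym (2 * k) 1 lam) :=
  newton_ric_eigen_inequality_general k lam hG
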